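/- Let κ be an uncountable cardinal with κ = κ^{<κ}, and let T ⊆ κ^{<κ} be a pruned subtree such that: (1) T contains no perfect subtree; (2) [T] is κ-Baire (it is not the union of κ-many nowhere dense subsets of [T]); (3) every node of T has at least κ-many immediate successors in T. Then [T] does not satisfy the Hurewicz dichotomy, i.e. [T] is not contained in any K_κ subset of κ^κ and [T] does not contain a closed-in-κ^κ subset homeomorphic to κ^κ. -/

import Mathlib

open Cardinal Set Topology
set_option linter.unusedSectionVars false
set_option maxHeartbeats 1000000

universe u

/-- The bounded topology on `K → Y`: basic open sets are determined by an
initial segment of values. -/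
def bTop (K : Type u) [LinearOrder K] (Y : Type u) : TopologicalSpace (K → Y) :=
  TopologicalSpace.generateFrom
    {U | ∃ (b : K) (s : K → Y), U = {x | ∀ i, i < b → x i = s i}}

/-- `A` is κ-compact: every open cover (for the bounded topology) has a
subcover of size `< #K`. -/
def KCompact (K : Type u) [LinearOrder K] {Y : Type u} (A : Set (K → Y)) : Prop :=
  ∀ 𝒰 : Set (Set (K → Y)), (∀ U ∈ 𝒰, IsOpen[bTop K Y] U) → A ⊆ ⋃₀ 𝒰 →
    ∃ 𝒱 ⊆ 𝒰, #𝒱 < #K ∧ A ⊆ ⋃₀ 𝒱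

/-- `B` is a `K_κ` subset: a union of κ-many κ-compact sets. -/
def IsKK (K : Type u) [LinearOrder K] (B : Set (K → K)) : Prop :=
  ∃ C : K → Set (K → K), (∀ b, KCompact K (C b)) ∧ B = ⋃ b, C b

/-- Nodes of the tree `Y^{<K}`: sequences of length `b`, for `b : K`. -/
abbrev Nd (K : Type u) [LinearOrder K] (Y : Type u) := Σ b : K, (Set.Iio b → Y)

/-- Restriction of a node to a smaller length. -/
def ndRes (K : Type u) [LinearOrder K] {Y : Type u} (p : Nd K Y) (c : K) (h : c ≤ p.1) :
    Nd K Y :=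
  ⟨c, fun i => p.2 ⟨i.1, lt_of_lt_of_le i.2 h⟩⟩

/-- Restriction of a branch `x : K → Y` to length `b`. -/
def xRes (K : Type u) [LinearOrder K] {Y : Type u} (x : K → Y) (b : K) : Nd K Y :=
  ⟨b, fun i => x i.1⟩

/-- `q` extends `p` as a sequence. -/
def NdExt (K : Type u) [LinearOrder K] {Y : Type u} (q p : Nd K Y) : Prop :=
  ∃ h : p.1 ≤ q.1, ∀ i : Set.Iio p.1, q.2 ⟨i.1, lt_of_lt_of_le i.2 h⟩ = p.2 i

/-- A subtree of `Y^{<K}`: a set of nodes closed under restriction. -/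
def IsSubtree (K : Type u) [LinearOrder K] {Y : Type u} (T : Set (Nd K Y)) : Prop :=
  ∀ p ∈ T, ∀ c, ∀ h : c ≤ p.1, ndRes K p c h ∈ T

/-- The body `[T]`: the set of `K`-branches through `T`. -/
def body (K : Type u) [LinearOrder K] {Y : Type u} (T : Set (Nd K Y)) : Set (K → Y) :=
  {x | ∀ b : K, xRes K x b ∈ T}

/-- `T` is pruned: every node is extended by a branch. -/
def Pruned (K : Type u) [LinearOrder K] {Y : Type u} (T : Set (Nd K Y)) : Prop :=
  ∀ p ∈ T, ∃ x ∈ body K T, NdExt K (xRes K x p.1) p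

/-- `b` is a limit element: not least, and with no immediate predecessor. -/
def IsLimElt (K : Type u) [LinearOrder K] (b : K) : Prop :=
  (∃ c, c < b) ∧ ∀ c, c < b → ∃ d, c < d ∧ d < b

/-- Superclosed: closed under unions of increasing sequences of length `< K`. -/
def Superclosed (K : Type u) [LinearOrder K] {Y : Type u} (T : Set (Nd K Y)) : Prop :=
  ∀ p : Nd K Y, IsLimElt K p.1 → (∀ c, ∀ h : c < p.1, ndRes K p c h.le ∈ T) → p ∈ T

/-- The values at position `p.1` realized by extensions of `p` in `T`, i.e. the
immediate successors of `p` in `T`. -/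
def splitVals (K : Type u) [LinearOrder K] {Y : Type u} (T : Set (Nd K Y)) (p : Nd K Y) :
    Set Y :=
  {a | ∃ q ∈ T, ∃ h : p.1 < q.1,
    (∀ i : Set.Iio p.1, q.2 ⟨i.1, i.2.trans h⟩ = p.2 i) ∧ q.2 ⟨p.1, h⟩ = a}

/-- A perfect tree: a nonempty superclosed subtree in which every node is
extended by a 2-splitting node. -/
def PerfectTree (K : Type u) [LinearOrder K] (T : Set (Nd K K)) : Prop :=
  T.Nonempty ∧ IsSubtree K T ∧ Superclosed K T ∧
    ∀ p ∈ T, ∃ q ∈ T, NdExt K q p ∧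
      ∃ a ∈ splitVals K T q, ∃ a' ∈ splitVals K T q, a ≠ a'

/-- A κ-Miller tree: a nonempty superclosed subtree in which every node is
extended by a κ-splitting node. -/
def MillerTree (K : Type u) [LinearOrder K] (T : Set (Nd K K)) : Prop :=
  T.Nonempty ∧ IsSubtree K T ∧ Superclosed K T ∧
    ∀ p ∈ T, ∃ q ∈ T, NdExt K q p ∧ #K ≤ #(splitVals K T q)

/-- A κ-tree: a subtree of height `K` all of whose levels have size `< #K`. -/
def KTree (K : Type u) [LinearOrder K] {Y : Type u} (T : Set (Nd K Y)) : Prop :=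
  (∀ b : K, ∃ t : Set.Iio b → Y, (⟨b, t⟩ : Nd K Y) ∈ T) ∧
    ∀ b : K, #{t : Set.Iio b → Y | (⟨b, t⟩ : Nd K Y) ∈ T} < #K

/-- A κ-Aronszajn tree: a κ-tree with no branch. -/
def Aronszajn (K : Type u) [LinearOrder K] (S : Set (Nd K K)) : Prop :=
  IsSubtree K S ∧ KTree K S ∧ body K S = ∅

/-- The tree property for `K`: every κ-tree has a branch. -/
def TreeProp (K : Type u) [LinearOrder K] : Prop :=
  ∀ T : Set (Nd K K), IsSubtree K T → KTree K T → (body K T).Nonempty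

/-- weak compactness: inaccessibility together with the tree property. -/
def WComp (K : Type u) [LinearOrder K] : Prop :=
  (#K).IsInaccessible ∧ TreeProp K

/-- `C` is homeomorphic to the generalized Baire space `K → K`. -/
def HomeoToBaire (K : Type u) [LinearOrder K] (C : Set (K → K)) : Prop :=
  letI := bTop K K
  Nonempty (↥C ≃ₜ (K → K))

/-- `C` is homeomorphic to the generalized Cantor space `K → ULift.{u} Bool`. -/
def HomeoToCantor (K : Type u) [LinearOrder K] (C : Set (K → K)) : Prop :=
  letI := bTop K K
  letI : TopologicalSpace (K → ULift.{u} Bool) := bTop K (ULift.{u} Bool)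
  Nonempty (↥C ≃ₜ (K → ULift.{u} Bool))

/-- The Hurewicz dichotomy for `A`. -/
def HD (K : Type u) [LinearOrder K] (A : Set (K → K)) : Prop :=
  (∃ B, IsKK K B ∧ A ⊆ B) ∨
    ∃ C ⊆ A, IsClosed[bTop K K] C ∧ HomeoToBaire K C

/-- The Miller-tree Hurewicz dichotomy for `A`. -/
def MillerHD (K : Type u) [LinearOrder K] (A : Set (K → K)) : Prop :=
  (∃ B, IsKK K B ∧ A ⊆ B) ∨ ∃ T, MillerTree K T ∧ body K T ⊆ A

/-- Σ¹₁ subsets of `K → K`: projections of closed subsets of the product. -/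
def Sigma11 (K : Type u) [LinearOrder K] (A : Set (K → K)) : Prop :=
  letI := bTop K K
  ∃ C : Set ((K → K) × (K → K)), IsClosed C ∧ A = Prod.fst '' C

/-- The κ-perfect set property. -/
def PSP (K : Type u) [LinearOrder K] (A : Set (K → K)) : Prop :=
  #A ≤ #K ∨ ∃ C ⊆ A, IsClosed[bTop K K] C ∧ HomeoToCantor K C

/-- `A ⊆ K → K` is bounded. -/
def BddSet (K : Type u) [LinearOrder K] (A : Set (K → K)) : Prop :=
  ∃ x : K → K, ∀ y ∈ A, ∀ i, y i ≤ x i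

/-- `A ⊆ K → K` is eventually bounded. -/
def EvBddSet (K : Type u) [LinearOrder K] (A : Set (K → K)) : Prop :=
  ∃ x : K → K, ∀ y ∈ A, ∃ b : K, ∀ i, b ≤ i → y i ≤ x i

/-- Nodes of the product tree `K^{<K} × K^{<K}` (pairs of equal length). -/
abbrev PNd (K : Type u) [LinearOrder K] := Σ b : K, (Set.Iio b → K) × (Set.Iio b → K)

/-- Subtree of the product tree: closed under simultaneous restriction. -/
def IsPSubtree (K : Type u) [LinearOrder K] (T : Set (PNd K)) : Prop :=
  ∀ p ∈ T, ∀ c, ∀ h : c ≤ p.1,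
    (⟨c, fun i => p.2.1 ⟨i.1, lt_of_lt_of_le i.2 h⟩,
        fun i => p.2.2 ⟨i.1, lt_of_lt_of_le i.2 h⟩⟩ : PNd K) ∈ T

/-- The projection `p[T]` of the set of branches of a product tree to the first
coordinate. -/
def pProj (K : Type u) [LinearOrder K] (T : Set (PNd K)) : Set (K → K) :=
  {x | ∃ y : K → K, ∀ b : K,
    (⟨b, fun i => x i.1, fun i => y i.1⟩ : PNd K) ∈ T}

/-- An `∃^x`-perfect embedding into a product tree `T`. -/
def PerfEmb (K : Type u) [LinearOrder K] (T : Set (PNd K)) (e : Nd K (ULift.{u} Bool) → PNd K) : Prop :=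
  (∀ u, e u ∈ T) ∧
  (∀ u u' : Nd K (ULift.{u} Bool), ∀ h : u.1 < u'.1,
     (∀ i : Set.Iio u.1, u'.2 ⟨i.1, i.2.trans h⟩ = u.2 i) →
     ∃ h' : (e u).1 < (e u').1,
       (∀ i : Set.Iio (e u).1, (e u').2.1 ⟨i.1, i.2.trans h'⟩ = (e u).2.1 i) ∧
       (∀ i : Set.Iio (e u).1, (e u').2.2 ⟨i.1, i.2.trans h'⟩ = (e u).2.2 i)) ∧
  (∀ u u' : Nd K (ULift.{u} Bool), ¬ NdExt K u u' → ¬ NdExt K u' u →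
     ¬ NdExt K ⟨(e u).1, (e u).2.1⟩ ⟨(e u').1, (e u').2.1⟩ ∧
     ¬ NdExt K ⟨(e u').1, (e u').2.1⟩ ⟨(e u).1, (e u).2.1⟩) ∧
  (∀ u : Nd K (ULift.{u} Bool), IsLimElt K u.1 → ∀ d, d < (e u).1 →
     ∃ c, ∃ h : c < u.1, d < (e (ndRes K u c h.le)).1)

/-- The immediate extension `u⌢⟨a⟩` of a node `u` by a value `a`. -/
def extNd (K : Type u) [LinearOrder K] [SuccOrder K] (u : Nd K K) (a : K) : Nd K K :=
  ⟨Order.succ u.1, fun i => if h : i.1 < u.1 then u.2 ⟨i.1, h⟩ else a⟩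

/-- An `∃^x`-superperfect embedding into a product tree `T`. -/
def SuperPerfEmb (K : Type u) [LinearOrder K] [SuccOrder K] (T : Set (PNd K))
    (e : Nd K K → PNd K) : Prop :=
  (∀ u, e u ∈ T) ∧
  (∀ u u' : Nd K K, ∀ h : u.1 < u'.1,
     (∀ i : Set.Iio u.1, u'.2 ⟨i.1, i.2.trans h⟩ = u.2 i) →
     ∃ h' : (e u).1 < (e u').1,
       (∀ i : Set.Iio (e u).1, (e u').2.1 ⟨i.1, i.2.trans h'⟩ = (e u).2.1 i) ∧
       (∀ i : Set.Iio (e u).1, (e u').2.2 ⟨i.1, i.2.trans h'⟩ = (e u).2.2 i)) ∧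
  (∀ u : Nd K K, IsLimElt K u.1 → ∀ d, d < (e u).1 →
     ∃ c, ∃ h : c < u.1, d < (e (ndRes K u c h.le)).1) ∧
  (∀ u : Nd K K, ∃ γ : K, (e u).1 ≤ γ ∧
     ∃ hlen : ∀ a : K, γ < (e (extNd K u a)).1,
       ∀ a b : K, a ≠ b →
         (∀ i : Set.Iio γ,
           (e (extNd K u a)).2.1 ⟨i.1, i.2.trans (hlen a)⟩ =
           (e (extNd K u b)).2.1 ⟨i.1, i.2.trans (hlen b)⟩) ∧
         (e (extNd K u a)).2.1 ⟨γ, hlen a⟩ ≠ (e (extNd K u b)).2.1 ⟨γ, hlen b⟩)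


section Infra
variable {K : Type u} [LinearOrder K] [WellFoundedLT K]

lemma kc_regular {K : Type u} [LinearOrder K] (hunc : ℵ₀ < #K)
    (hpow : Cardinal.powerlt #K #K = #K) : (#K).IsRegular := by
  refine ⟨hunc.le, ?_⟩
  by_contra h
  push_neg at h
  have h2 : (#K) ^ ((#K).ord.cof) ≤ #K ^< #K := Cardinal.le_powerlt _ h
  rw [hpow] at h2
  exact absurd h2 (not_le.2 (Cardinal.lt_power_cof hunc.le))

lemma kc_bdd (hseg : ∀ b : K, #(Set.Iio b) < #K) (hunc : ℵ₀ < #K)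
    (hpow : Cardinal.powerlt #K #K = #K) {A : Set K} (hA : #A < #K) :
    ∃ m : K, ∀ a ∈ A, a ≤ m := by
  by_contra h
  push_neg at h
  have hcov : (Set.univ : Set K) ⊆ ⋃ a : A, Set.Iio a.1 := by
    intro m _
    obtain ⟨a, ha, hma⟩ := h m
    exact Set.mem_iUnion.2 ⟨⟨a, ha⟩, hma⟩
  have h1 : #K ≤ #(⋃ a : A, Set.Iio a.1) := by
    calc #K = #(Set.univ : Set K) := (@Cardinal.mk_univ K).symm
    _ ≤ _ := Cardinal.mk_le_mk_of_subset hcov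
  have h2 : #(⋃ a : A, Set.Iio a.1) < #K := by
    refine lt_of_le_of_lt Cardinal.mk_iUnion_le_sum_mk ?_
    refine Cardinal.sum_lt_lift_of_isRegular (kc_regular hunc hpow) ?_ fun a => hseg a.1
    rwa [Cardinal.lift_id]
  exact absurd h1 (not_le.2 h2)

lemma kc_ne (hunc : ℵ₀ < #K) : Nonempty K :=
  Cardinal.mk_ne_zero_iff.1 (ne_of_gt (lt_trans Cardinal.aleph0_pos hunc))

lemma kc_nomax (hseg : ∀ b : K, #(Set.Iio b) < #K) (hunc : ℵ₀ < #K) (a : K) :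
    ∃ b, a < b := by
  by_contra h
  push_neg at h
  have hs : (Set.univ : Set K) ⊆ Set.Iio a ∪ {a} := by
    intro m _
    rcases lt_or_eq_of_le (h m) with h' | h'
    · exact Or.inl h'
    · exact Or.inr h'
  have h1 : #K ≤ #(Set.Iio a ∪ {a} : Set K) :=
    (@Cardinal.mk_univ K).symm.le.trans (Cardinal.mk_le_mk_of_subset hs)
  have h2 : #(Set.Iio a ∪ {a} : Set K) < #K := by
    refine lt_of_le_of_lt (Cardinal.mk_union_le _ _) ?_
    rw [Cardinal.mk_singleton a]
    exact Cardinal.add_lt_of_lt hunc.le (hseg a)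
      (lt_of_le_of_lt Cardinal.one_le_aleph0 hunc)
  exact absurd h1 (not_le.2 h2)

noncomputable def kMin (A : Set K) (h : A.Nonempty) : K :=
  (IsWellFounded.wf (r := ((· < ·) : K → K → Prop))).min A h

lemma kMin_mem (A : Set K) (h : A.Nonempty) : kMin A h ∈ A :=
  WellFounded.min_mem _ A h

lemma kMin_le (A : Set K) (h : A.Nonempty) {a : K} (ha : a ∈ A) : kMin A h ≤ a :=
  not_lt.1 (WellFounded.not_lt_min _ A ha)

variable (hseg : ∀ b : K, #(Set.Iio b) < #K) (hunc : ℵ₀ < #K)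

noncomputable def sK (a : K) : K :=
  kMin {b | a < b} (kc_nomax hseg hunc a)

lemma lt_sK (a : K) : a < sK hseg hunc a := kMin_mem {b | a < b} _

lemma sK_le {a b : K} (h : a < b) : sK hseg hunc a ≤ b := kMin_le {b | a < b} _ h

lemma lt_sK_iff {a b : K} : b < sK hseg hunc a ↔ b ≤ a :=
  ⟨fun h => not_lt.1 fun h' => absurd h (not_lt.2 (sK_le hseg hunc h')),
   fun h => lt_of_le_of_lt h (lt_sK hseg hunc a)⟩

noncomputable def lubF {ι : Type u} (g : ι → K) (hbd : ∃ m, ∀ i, g i ≤ m) : K :=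
  kMin {m | ∀ i, g i ≤ m} hbd

lemma le_lubF {ι : Type u} (g : ι → K) (hbd : ∃ m, ∀ i, g i ≤ m) (i : ι) :
    g i ≤ lubF g hbd := by
  have h := kMin_mem {m | ∀ i, g i ≤ m} hbd
  exact h i

lemma lubF_le {ι : Type u} (g : ι → K) (hbd : ∃ m, ∀ i, g i ≤ m) {m : K}
    (hm : ∀ i, g i ≤ m) : lubF g hbd ≤ m := kMin_le {m | ∀ i, g i ≤ m} _ hm

lemma lt_lubF {ι : Type u} (g : ι → K) (hbd : ∃ m, ∀ i, g i ≤ m) {d : K}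
    (hd : d < lubF g hbd) : ∃ i, d < g i := by
  by_contra h
  push_neg at h
  exact absurd hd (not_lt.2 (lubF_le g hbd h))

include hseg hunc in
lemma bddF (hpow : Cardinal.powerlt #K #K = #K) {ι : Type u} (hι : #ι < #K) (g : ι → K) :
    ∃ m, ∀ i, g i ≤ m := by
  obtain ⟨m, hm⟩ := kc_bdd hseg hunc hpow (A := Set.range g)
    (lt_of_le_of_lt Cardinal.mk_range_le hι)
  exact ⟨m, fun i => hm _ ⟨i, rfl⟩⟩

end Infra

section Topo
variable {K : Type u} [LinearOrder K] [WellFoundedLT K] {Y : Type u}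

/-- basic cylinder -/
def Cylb (b : K) (s : K → Y) : Set (K → Y) := {x | ∀ i, i < b → x i = s i}

lemma isOpen_Cylb {b : K} {s : K → Y} : IsOpen[bTop K Y] (Cylb b s) :=
  TopologicalSpace.isOpen_generateFrom_of_mem ⟨b, s, rfl⟩

lemma mem_Cylb_self {b : K} (x : K → Y) : x ∈ Cylb b x := fun _ _ => rfl

lemma cyl_subset_of_isOpen (hne : Nonempty K) {U : Set (K → Y)}
    (hU : IsOpen[bTop K Y] U) {x : K → Y} (hx : x ∈ U) :
    ∃ b : K, Cylb b x ⊆ U := by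
  have hU' : TopologicalSpace.GenerateOpen
      {U | ∃ (b : K) (s : K → Y), U = {x | ∀ i, i < b → x i = s i}} U := hU
  clear hU
  revert hx
  induction hU' with
  | basic V hV =>
    intro hx
    obtain ⟨b, s, rfl⟩ := hV
    exact ⟨b, fun y hy i hi => (hy i hi).trans (hx i hi)⟩
  | univ => exact fun _ => ⟨Classical.choice hne, fun _ _ => trivial⟩
  | inter V W _ _ ihV ihW =>
    intro hx
    obtain ⟨b₁, h₁⟩ := ihV hx.1
    obtain ⟨b₂, h₂⟩ := ihW hx.2
    exact ⟨max b₁ b₂,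
      fun y hy => ⟨h₁ (fun i hi => hy i (lt_of_lt_of_le hi (le_max_left _ _))),
        h₂ (fun i hi => hy i (lt_of_lt_of_le hi (le_max_right _ _)))⟩⟩
  | sUnion S _ ih =>
    intro hx
    obtain ⟨V, hVS, hxV⟩ := hx
    obtain ⟨b, hb⟩ := ih V hVS hxV
    exact ⟨b, fun y hy => ⟨V, hVS, hb hy⟩⟩

lemma isOpen_of_cylb {U : Set (K → Y)}
    (h : ∀ x ∈ U, ∃ b : K, Cylb b x ⊆ U) : IsOpen[bTop K Y] U := by
  have : U = ⋃ x : U, Cylb (Classical.choose (h x.1 x.2)) x.1 := by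
    ext y
    constructor
    · intro hy
      exact Set.mem_iUnion.2 ⟨⟨y, hy⟩, mem_Cylb_self y⟩
    · rintro hy
      obtain ⟨x, hx⟩ := Set.mem_iUnion.1 hy
      exact Classical.choose_spec (h x.1 x.2) hx
  rw [this]
  exact @isOpen_iUnion _ _ (bTop K Y) _ (fun x => isOpen_Cylb)

end Topo

section PartOne
variable {K : Type u} [LinearOrder K] [WellFoundedLT K]
variable (hseg : ∀ b : K, #(Set.Iio b) < #K) (hunc : ℵ₀ < #K)
  (hpow : Cardinal.powerlt #K #K = #K)

/-- cylinder of a node -/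
def CylN (q : Nd K K) : Set (K → K) := {z | ∀ i : Set.Iio q.1, z i.1 = q.2 i}

noncomputable def upd (x : K → K) (b a : K) : K → K := fun i => if i = b then a else x i

include hseg hunc hpow in
lemma nwd {T : Set (Nd K K)} (h3 : ∀ p ∈ T, #K ≤ #(splitVals K T p))
    {C : Set (K → K)} (hC : KCompact K C) {x : K → K} (hx : x ∈ body K T) (b : K) :
    ∃ q ∈ T, NdExt K q (xRes K x b) ∧ ∀ z ∈ C, z ∉ CylN q := by
  by_contra hcon
  push_neg at hcon
  set p : Nd K K := xRes K x b with hp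
  have hpT : p ∈ T := hx b
  have hp1 : p.1 = b := rfl
  -- the cover
  set W : Set (K → K) := {y | ∃ i, i < b ∧ y i ≠ x i} with hW
  set V : K → Set (K → K) := fun a => Cylb (sK hseg hunc b) (upd x b a) with hV
  set 𝒰 : Set (Set (K → K)) := insert W (Set.range V) with h𝒰
  have hWopen : IsOpen[bTop K K] W := by
    refine isOpen_of_cylb (fun y hy => ?_)
    obtain ⟨i, hib, hne⟩ := hy
    exact ⟨sK hseg hunc i, fun y' hy' =>
      ⟨i, hib, by rw [hy' i (lt_sK hseg hunc i)]; exact hne⟩⟩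
  have hopen : ∀ U ∈ 𝒰, IsOpen[bTop K K] U := by
    rintro U (rfl | ⟨a, rfl⟩)
    · exact hWopen
    · exact isOpen_Cylb
  have hcov : C ⊆ ⋃₀ 𝒰 := by
    intro z _
    by_cases hz : ∃ i, i < b ∧ z i ≠ x i
    · exact ⟨W, Set.mem_insert _ _, hz⟩
    · push_neg at hz
      refine ⟨V (z b), Set.mem_insert_of_mem _ ⟨z b, rfl⟩, ?_⟩
      intro i hi
      rcases eq_or_lt_of_le ((lt_sK_iff hseg hunc).1 hi) with h' | h'
      · simp [upd, h']
      · simp only [upd, if_neg (ne_of_lt h')]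
        exact (hz i h').symm ▸ rfl
  obtain ⟨𝒱, h𝒱𝒰, h𝒱card, h𝒱cov⟩ := hC 𝒰 hopen hcov
  -- injection from splitVals into 𝒱
  have hVmem : ∀ a ∈ splitVals K T p, V a ∈ 𝒱 := by
    intro a ha
    obtain ⟨q, hqT, hlt, hagr, hval⟩ := ha
    have hqp : NdExt K q p := ⟨hlt.le, hagr⟩
    obtain ⟨z, hzC, hzq⟩ := hcon q hqT hqp
    obtain ⟨Vz, hVz𝒱, hzVz⟩ := h𝒱cov hzC
    have hVz𝒰 : Vz ∈ 𝒰 := h𝒱𝒰 hVz𝒱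
    rcases hVz𝒰 with rfl | ⟨a', rfl⟩
    · exfalso
      obtain ⟨i, hib, hne⟩ := hzVz
      exact hne ((hzq ⟨i, lt_of_lt_of_le hib hlt.le⟩).trans (hagr ⟨i, hib⟩))
    · have h1 : z b = a' := by
        have := hzVz b (lt_sK hseg hunc b)
        simpa [upd] using this
      have h2 : z b = a := by rw [hzq ⟨b, hlt⟩]; exact hval
      rwa [← h1.symm.trans h2]
  have hinj : Function.Injective
      (fun a : ↥(splitVals K T p) => (⟨V a.1, hVmem a.1 a.2⟩ : ↥𝒱)) := by
    intro a a' haa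
    have hsets : V a.1 = V a'.1 := congrArg Subtype.val haa
    have h1 : upd x b a.1 ∈ V a.1 := mem_Cylb_self _
    rw [hsets] at h1
    have h2 := h1 b (lt_sK hseg hunc b)
    simp only [upd, if_pos rfl] at h2
    exact Subtype.ext h2
  have : #K ≤ #↥𝒱 := le_trans (h3 p hpT) (Cardinal.mk_le_of_injective hinj)
  exact absurd this (not_le.2 h𝒱card)

include hseg hunc hpow in
lemma part1 {T : Set (Nd K K)} (hT : IsSubtree K T) (hpr : Pruned K T)
    (h2 : ∀ D : K → Set (K → K),
      (∀ c, ∃ U, IsOpen[bTop K K] U ∧ D c = U ∩ body K T) →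
      (∀ c, ∀ x ∈ body K T, ∀ b : K, ∃ y ∈ D c, ∀ i, i < b → y i = x i) →
      ∃ x ∈ body K T, ∀ c, x ∈ D c)
    (h3 : ∀ p ∈ T, #K ≤ #(splitVals K T p)) :
    ¬ ∃ B, IsKK K B ∧ body K T ⊆ B := by
  rintro ⟨B, ⟨Cb, hcomp, rfl⟩, hsub⟩
  set U : K → Set (K → K) := fun c =>
    {y | ∃ b' : K, ∀ z ∈ Cb c, ∃ i, i < b' ∧ z i ≠ y i} with hU
  set D : K → Set (K → K) := fun c => U c ∩ body K T with hD
  have hUopen : ∀ c, IsOpen[bTop K K] (U c) := by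
    intro c
    refine isOpen_of_cylb (fun y hy => ?_)
    obtain ⟨b', hb'⟩ := hy
    refine ⟨b', fun y' hy' => ⟨b', fun z hz => ?_⟩⟩
    obtain ⟨i, hib, hne⟩ := hb' z hz
    exact ⟨i, hib, fun h => hne (h.trans (hy' i hib))⟩
  have hdense : ∀ c, ∀ x ∈ body K T, ∀ b : K, ∃ y ∈ D c, ∀ i, i < b → y i = x i := by
    intro c x hx b
    obtain ⟨q, hqT, hqp, hqdisj⟩ := nwd hseg hunc hpow h3 (hcomp c) hx b
    obtain ⟨y, hyb, hyq⟩ := hpr q hqT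
    obtain ⟨hlen, hvals⟩ := hyq
    have hyvals : ∀ i : Set.Iio q.1, y i.1 = q.2 i := by
      intro i
      have := hvals i
      exact this
    refine ⟨y, ⟨⟨q.1, fun z hz => ?_⟩, hyb⟩, ?_⟩
    · have hznot := hqdisj z hz
      simp only [CylN, Set.mem_setOf_eq, not_forall] at hznot
      obtain ⟨i, hi⟩ := hznot
      exact ⟨i.1, i.2, fun h => hi (h.trans (hyvals i))⟩
    · intro i hib
      obtain ⟨hle, hagr⟩ := hqp
      have hib' : i < q.1 := lt_of_lt_of_le hib hle
      calc y i = q.2 ⟨i, hib'⟩ := hyvals ⟨i, hib'⟩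
      _ = x i := hagr ⟨i, hib⟩
  obtain ⟨x, hx, hxD⟩ := h2 D (fun c => ⟨U c, hUopen c, rfl⟩) hdense
  obtain ⟨c₀, hc₀⟩ := Set.mem_iUnion.1 (hsub hx)
  obtain ⟨⟨b', hb'⟩, -⟩ := hxD c₀
  obtain ⟨i, -, hne⟩ := hb' x hc₀
  exact hne rfl

end PartOne

section NdUtil
variable {K : Type u} [LinearOrder K] [WellFoundedLT K] {Y : Type u}

lemma ndExt_refl (p : Nd K Y) : NdExt K p p := ⟨le_rfl, fun _ => rfl⟩

lemma ndExt_val {q p : Nd K Y} (h : NdExt K q p) {i : K} (hi : i < p.1) (hi' : i < q.1) :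
    q.2 ⟨i, hi'⟩ = p.2 ⟨i, hi⟩ := h.2 ⟨i, hi⟩

lemma ndExt_trans {r q p : Nd K Y} (h1 : NdExt K r q) (h2 : NdExt K q p) : NdExt K r p := by
  obtain ⟨hq, hvq⟩ := h1
  obtain ⟨hp, hvp⟩ := h2
  exact ⟨hp.trans hq, fun i => (ndExt_val ⟨hq, hvq⟩ (lt_of_lt_of_le i.2 hp) _).trans (hvp i)⟩

lemma ndExt_res (p : Nd K Y) (c : K) (h : c ≤ p.1) : NdExt K p (ndRes K p c h) :=
  ⟨h, fun _ => rfl⟩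

lemma ndExt_eq {q p : Nd K Y} (h : NdExt K q p) (hlen : q.1 = p.1) : q = p := by
  obtain ⟨b, tq⟩ := q
  obtain ⟨b', tp⟩ := p
  cases hlen
  simp only [Sigma.mk.inj_iff, heq_eq_eq, true_and]
  funext i
  exact h.2 i

lemma ndExt_comparable {r q q' : Nd K Y} (h : NdExt K r q) (h' : NdExt K r q') :
    NdExt K q q' ∨ NdExt K q' q := by
  rcases le_total q'.1 q.1 with hle | hle
  · refine Or.inl ⟨hle, fun i => ?_⟩
    have h1 := ndExt_val h (lt_of_lt_of_le i.2 hle) (lt_of_lt_of_le i.2 (hle.trans h.1))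
    have h2 := ndExt_val h' i.2 (lt_of_lt_of_le i.2 (hle.trans h.1))
    exact h1.symm.trans h2
  · refine Or.inr ⟨hle, fun i => ?_⟩
    have h1 := ndExt_val h' (lt_of_lt_of_le i.2 hle) (lt_of_lt_of_le i.2 (hle.trans h'.1))
    have h2 := ndExt_val h i.2 (lt_of_lt_of_le i.2 (hle.trans h'.1))
    exact h1.symm.trans h2

/-- incompatible extensions stay incompatible -/
lemma ndExt_incompat {q q' r r' : Nd K Y} (hq : NdExt K r q) (hq' : NdExt K r' q')
    {i : K} (hi : i < q.1) (hi' : i < q'.1) (hne : q.2 ⟨i, hi⟩ ≠ q'.2 ⟨i, hi'⟩) :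
    ¬ NdExt K r r' ∧ ¬ NdExt K r' r := by
  constructor
  · rintro h
    have hir : i < r'.1 := lt_of_lt_of_le hi' hq'.1
    have hir2 : i < r.1 := lt_of_lt_of_le hir h.1
    exact hne ((ndExt_val hq hi hir2).symm.trans
      (((ndExt_val h hir hir2).trans (ndExt_val hq' hi' hir))))
  · rintro h
    have hir : i < r.1 := lt_of_lt_of_le hi hq.1
    have hir2 : i < r'.1 := lt_of_lt_of_le hir h.1
    have e1 : q.2 ⟨i, hi⟩ = r.2 ⟨i, hir⟩ := (ndExt_val hq hi hir).symm
    have e2 : r.2 ⟨i, hir⟩ = r'.2 ⟨i, hir2⟩ := (ndExt_val h hir hir2).symm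
    have e3 : r'.2 ⟨i, hir2⟩ = q'.2 ⟨i, hi'⟩ := ndExt_val hq' hi' hir2
    exact hne ((e1.trans e2).trans e3)

end NdUtil

section Emb
variable {K : Type u} [LinearOrder K] [WellFoundedLT K]
variable (hseg : ∀ b : K, #(Set.Iio b) < #K) (hunc : ℵ₀ < #K)
  (hpow : Cardinal.powerlt #K #K = #K)
variable (f : (K → K) → (K → K))

/-- least element of K -/
noncomputable def botK (hunc : ℵ₀ < #K) : K :=
  kMin Set.univ ⟨Classical.choice (kc_ne hunc), trivial⟩

lemma botK_le (hunc : ℵ₀ < #K) (a : K) : botK hunc ≤ a := kMin_le _ _ trivial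

/-- the empty node -/
noncomputable def rootN (hunc : ℵ₀ < #K) {Y : Type u} : Nd K Y :=
  ⟨botK hunc, fun i => absurd i.2 (not_lt.2 (botK_le hunc i.1))⟩

/-- `f` maps everything through `σ` to something through `e`. -/
def Controls (σ e : Nd K K) : Prop :=
  ∀ x : K → K, (∀ i : Set.Iio σ.1, x i.1 = σ.2 i) → ∀ i : Set.Iio e.1, f x i.1 = e.2 i

lemma controls_root : Controls f (rootN hunc) (rootN hunc) := by
  intro x _ i
  exact absurd i.2 (not_lt.2 (botK_le hunc i.1))

/-- restriction of a level function -/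
def resF {b : K} (t : Set.Iio b → ULift.{u} Bool) (c : K) (h : c ≤ b) :
    Set.Iio c → ULift.{u} Bool :=
  fun i => t ⟨i.1, lt_of_lt_of_le i.2 h⟩

variable (hfi : Function.Injective f)
  (hfc : ∀ U : Set (K → K), IsOpen[bTop K K] U → IsOpen[bTop K K] (f ⁻¹' U))

def GoodPair (σ₀ e₀ : Nd K K) (g : ULift.{u} Bool → Nd K K × Nd K K) : Prop :=
  (∀ j, σ₀.1 < (g j).1.1 ∧ NdExt K (g j).1 σ₀ ∧ NdExt K (g j).2 e₀ ∧
    e₀.1 < (g j).2.1 ∧ Controls f (g j).1 (g j).2) ∧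
  (g ⟨false⟩).2.1 = (g ⟨true⟩).2.1 ∧
  ∃ i, ∃ h : i < (g ⟨false⟩).2.1, ∃ h' : i < (g ⟨true⟩).2.1,
    (g ⟨false⟩).2.2 ⟨i, h⟩ ≠ (g ⟨true⟩).2.2 ⟨i, h'⟩

include hseg hunc hfi hfc in
lemma succ_exists (σ₀ e₀ : Nd K K) (hc : Controls f σ₀ e₀) :
    ∃ g, GoodPair f σ₀ e₀ g := by
  classical
  set v : ULift.{u} Bool → K := fun j => if j.down then sK hseg hunc (botK hunc) else botK hunc
    with hv
  set x : ULift.{u} Bool → K → K :=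
    fun j i => if h : i < σ₀.1 then σ₀.2 ⟨i, h⟩ else v j with hx
  have hxσ : ∀ j, ∀ i : Set.Iio σ₀.1, x j i.1 = σ₀.2 i := by
    intro j i; exact dif_pos i.2
  have hxne : x ⟨false⟩ ≠ x ⟨true⟩ := by
    intro h
    have := congrFun h σ₀.1
    simp only [hx, dif_neg (lt_irrefl σ₀.1), hv] at this
    exact absurd this.symm (ne_of_gt (lt_sK hseg hunc (botK hunc)))
  have hfne : f (x ⟨false⟩) ≠ f (x ⟨true⟩) := fun h => hxne (hfi h)
  obtain ⟨i, hi⟩ := Function.ne_iff.1 hfne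
  set γ := sK hseg hunc i with hγ
  have hiγ : i < γ := lt_sK hseg hunc i
  have hie : e₀.1 ≤ i := by
    by_contra hlt
    push_neg at hlt
    have h1 := hc (x ⟨false⟩) (hxσ _) ⟨i, hlt⟩
    have h2 := hc (x ⟨true⟩) (hxσ _) ⟨i, hlt⟩
    exact hi (h1.trans h2.symm)
  -- continuity moduli
  have hpre : ∀ j, ∃ m : K, Cylb m (x j) ⊆ f ⁻¹' (Cylb γ (f (x j))) := by
    intro j
    exact cyl_subset_of_isOpen (kc_ne hunc) (hfc _ isOpen_Cylb) (Set.mem_preimage.2 (mem_Cylb_self (f (x j))))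
  set m : ULift.{u} Bool → K := fun j => (hpre j).choose with hm
  set m' : ULift.{u} Bool → K := fun j => sK hseg hunc (max (m j) σ₀.1) with hm'
  refine ⟨fun j => (⟨m' j, fun k => x j k.1⟩, ⟨γ, fun k => f (x j) k.1⟩), ?_, rfl, i, hiγ, hiγ, hi⟩
  intro j
  have hσm' : σ₀.1 < m' j :=
    lt_of_le_of_lt (le_max_right _ _) (lt_sK hseg hunc _)
  refine ⟨hσm', ⟨hσm'.le, fun k => hxσ j k⟩,
    ⟨hie.trans hiγ.le, fun k => hc (x j) (hxσ j) k⟩,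
    lt_of_le_of_lt hie hiγ, ?_⟩
  intro y hy k
  have hyx : y ∈ Cylb (m j) (x j) := by
    intro a ha
    have ha' : a < m' j := lt_of_lt_of_le ha ((le_max_left _ _).trans (lt_sK hseg hunc _).le)
    exact hy ⟨a, ha'⟩
  have := (hpre j).choose_spec hyx
  exact this k.1 k.2

end Emb

section Rec
variable {K : Type u} [LinearOrder K] [WellFoundedLT K]
variable (hseg : ∀ b : K, #(Set.Iio b) < #K) (hunc : ℵ₀ < #K)
  (hpow : Cardinal.powerlt #K #K = #K)
variable (f : (K → K) → (K → K))
variable (hfi : Function.Injective f)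
  (hfc : ∀ U : Set (K → K), IsOpen[bTop K K] U → IsOpen[bTop K K] (f ⁻¹' U))

/-- glue a small family of nodes into a node of lub length -/
noncomputable def limN (b : K) (G : Set.Iio b → Nd K K) : Nd K K :=
  ⟨lubF (fun c => (G c).1) (bddF hseg hunc hpow (hseg b) (fun c => (G c).1)),
   fun i =>
     (G (lt_lubF (fun c => (G c).1) (bddF hseg hunc hpow (hseg b) (fun c => (G c).1))
          i.2).choose).2
       ⟨i.1, (lt_lubF (fun c => (G c).1) (bddF hseg hunc hpow (hseg b) (fun c => (G c).1))
          i.2).choose_spec⟩⟩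

lemma limN_len_le (b : K) (G : Set.Iio b → Nd K K) (c : Set.Iio b) :
    (G c).1 ≤ (limN hseg hunc hpow b G).1 :=
  le_lubF (fun c => (G c).1) (bddF hseg hunc hpow (hseg b) (fun c => (G c).1)) c

lemma limN_len_lt (b : K) (G : Set.Iio b → Nd K K) {d : K}
    (hd : d < (limN hseg hunc hpow b G).1) : ∃ c, d < (G c).1 :=
  lt_lubF (fun c => (G c).1) (bddF hseg hunc hpow (hseg b) (fun c => (G c).1)) hd

/-- if the family is a compatible chain, the glue extends every member -/
lemma limN_ext (b : K) (G : Set.Iio b → Nd K K)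
    (hch : ∀ c c' : Set.Iio b, NdExt K (G c) (G c') ∨ NdExt K (G c') (G c))
    (c : Set.Iio b) : NdExt K (limN hseg hunc hpow b G) (G c) := by
  refine ⟨limN_len_le hseg hunc hpow b G c, fun i => ?_⟩
  set hl := lt_lubF (fun c => (G c).1) (bddF hseg hunc hpow (hseg b) (fun c => (G c).1))
    (lt_of_lt_of_le i.2 (limN_len_le hseg hunc hpow b G c)) with hhl
  show (G hl.choose).2 ⟨i.1, hl.choose_spec⟩ = (G c).2 i
  rcases hch hl.choose c with h | h
  · exact ndExt_val h i.2 hl.choose_spec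
  · exact (ndExt_val h hl.choose_spec i.2).symm

open Classical in
noncomputable def stepF (b : K)
    (IH : ∀ c, c < b → (Set.Iio c → ULift.{u} Bool) → Nd K K × Nd K K)
    (t : Set.Iio b → ULift.{u} Bool) : Nd K K × Nd K K :=
  if hbase : ∀ c : K, ¬ c < b then (rootN hunc, rootN hunc)
  else if hsucc : ∃ c, c < b ∧ ∀ d, d < b → d ≤ c then
    (if hctl : Controls f (IH hsucc.choose hsucc.choose_spec.1
          (resF t hsucc.choose hsucc.choose_spec.1.le)).1
        (IH hsucc.choose hsucc.choose_spec.1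
          (resF t hsucc.choose hsucc.choose_spec.1.le)).2 then
      (succ_exists hseg hunc f hfi hfc _ _ hctl).choose (t ⟨hsucc.choose, hsucc.choose_spec.1⟩)
    else IH hsucc.choose hsucc.choose_spec.1 (resF t hsucc.choose hsucc.choose_spec.1.le))
  else
    (limN hseg hunc hpow b (fun c => (IH c.1 c.2 (resF t c.1 c.2.le)).1),
     limN hseg hunc hpow b (fun c => (IH c.1 c.2 (resF t c.1 c.2.le)).2))

/-- the recursive pair of embeddings -/
noncomputable def Phi : ∀ b : K, (Set.Iio b → ULift.{u} Bool) → Nd K K × Nd K K :=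
  WellFounded.fix (C := fun b => (Set.Iio b → ULift.{u} Bool) → Nd K K × Nd K K)
    (wellFounded_lt : WellFounded ((· < ·) : K → K → Prop))
    (stepF hseg hunc hpow f hfi hfc)

lemma Phi_eq (b : K) :
    Phi hseg hunc hpow f hfi hfc b
      = stepF hseg hunc hpow f hfi hfc b (fun c _ => Phi hseg hunc hpow f hfi hfc c) :=
  WellFounded.fix_eq _ _ b

end Rec

section Master
variable {K : Type u} [LinearOrder K] [WellFoundedLT K]
variable (hseg : ∀ b : K, #(Set.Iio b) < #K) (hunc : ℵ₀ < #K)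
  (hpow : Cardinal.powerlt #K #K = #K)
variable (f : (K → K) → (K → K))
variable (hfi : Function.Injective f)
  (hfc : ∀ U : Set (K → K), IsOpen[bTop K K] U → IsOpen[bTop K K] (f ⁻¹' U))

lemma goodPair_split {σ e : Nd K K} {g : ULift.{u} Bool → Nd K K × Nd K K}
    (hg : GoodPair f σ e g) {j j' : ULift.{u} Bool} (hjj : j ≠ j') :
    (g j).2.1 = (g j').2.1 ∧ ∃ i, ∃ h : i < (g j).2.1, ∃ h' : i < (g j').2.1,
      (g j).2.2 ⟨i, h⟩ ≠ (g j').2.2 ⟨i, h'⟩ := by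
  obtain ⟨-, hlen, i, h, h', hne⟩ := hg
  obtain ⟨jb⟩ := j
  obtain ⟨jb'⟩ := j'
  cases jb <;> cases jb'
  · exact absurd rfl hjj
  · exact ⟨hlen, i, h, h', hne⟩
  · exact ⟨hlen.symm, i, h', h, hne.symm⟩
  · exact absurd rfl hjj

/-- the master invariant -/
def MInv (b : K) : Prop :=
  ∀ t : Set.Iio b → ULift.{u} Bool,
    Controls f (Phi hseg hunc hpow f hfi hfc b t).1 (Phi hseg hunc hpow f hfi hfc b t).2
    ∧ b ≤ (Phi hseg hunc hpow f hfi hfc b t).2.1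
    ∧ (∀ c (h : c ≤ b),
        NdExt K (Phi hseg hunc hpow f hfi hfc b t).1
          (Phi hseg hunc hpow f hfi hfc c (resF t c h)).1 ∧
        NdExt K (Phi hseg hunc hpow f hfi hfc b t).2
          (Phi hseg hunc hpow f hfi hfc c (resF t c h)).2)
    ∧ (IsLimElt K b → ∀ d, d < (Phi hseg hunc hpow f hfi hfc b t).2.1 →
        ∃ c, ∃ h : c < b, d < (Phi hseg hunc hpow f hfi hfc c (resF t c h.le)).2.1)
    ∧ (∀ (hx : ∃ c, c < b ∧ ∀ d, d < b → d ≤ c), ∀ t' : Set.Iio b → ULift.{u} Bool,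
        resF t hx.choose hx.choose_spec.1.le = resF t' hx.choose hx.choose_spec.1.le →
        t ⟨hx.choose, hx.choose_spec.1⟩ ≠ t' ⟨hx.choose, hx.choose_spec.1⟩ →
        (Phi hseg hunc hpow f hfi hfc b t).2.1 = (Phi hseg hunc hpow f hfi hfc b t').2.1 ∧
        ∃ i, ∃ h : i < (Phi hseg hunc hpow f hfi hfc b t).2.1,
          ∃ h' : i < (Phi hseg hunc hpow f hfi hfc b t').2.1,
          (Phi hseg hunc hpow f hfi hfc b t).2.2 ⟨i, h⟩ ≠
            (Phi hseg hunc hpow f hfi hfc b t').2.2 ⟨i, h'⟩)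

lemma master : ∀ b : K, MInv hseg hunc hpow f hfi hfc b := by
  intro b
  induction b using WellFounded.induction (wellFounded_lt : WellFounded ((· < ·) : K → K → Prop)) with
  | _ b IH =>
  intro t
  by_cases hbase : ∀ c : K, ¬ c < b
  · -- base case
    have hb : ∀ t' : Set.Iio b → ULift.{u} Bool,
        Phi hseg hunc hpow f hfi hfc b t' = (rootN hunc, rootN hunc) := by
      intro t'
      rw [Phi_eq]
      simp only [stepF]
      rw [dif_pos hbase]
    refine ⟨?_, ?_, ?_, ?_, ?_⟩
    · rw [hb t]; exact controls_root hunc f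
    · rw [hb t]; exact not_lt.1 (hbase _)
    · intro c h
      rcases eq_or_lt_of_le h with rfl | hlt
      · exact ⟨ndExt_refl _, ndExt_refl _⟩
      · exact absurd hlt (hbase c)
    · intro hlim
      obtain ⟨c, hc⟩ := hlim.1
      exact absurd hc (hbase c)
    · intro hx
      exact absurd hx.choose_spec.1 (hbase _)
  · by_cases hsucc : ∃ c, c < b ∧ ∀ d, d < b → d ≤ c
    · -- successor case
      set c₀ := hsucc.choose with hc₀def
      have hc₀ : c₀ < b ∧ ∀ d, d < b → d ≤ c₀ := hsucc.choose_spec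
      have hIH := IH c₀ hc₀.1 (resF t c₀ hc₀.1.le)
      have hctl : Controls f
          (Phi hseg hunc hpow f hfi hfc c₀ (resF t c₀ hc₀.1.le)).1
          (Phi hseg hunc hpow f hfi hfc c₀ (resF t c₀ hc₀.1.le)).2 := hIH.1
      have hg := (succ_exists hseg hunc f hfi hfc _ _ hctl).choose_spec
      set g := (succ_exists hseg hunc f hfi hfc _ _ hctl).choose with hgdef
      have hb : ∀ t' : Set.Iio b → ULift.{u} Bool,
          resF t c₀ hc₀.1.le = resF t' c₀ hc₀.1.le →
          Phi hseg hunc hpow f hfi hfc b t' = g (t' ⟨c₀, hc₀.1⟩) := by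
        intro t' hres
        have hctl' : Controls f
            (Phi hseg hunc hpow f hfi hfc c₀ (resF t' c₀ hc₀.1.le)).1
            (Phi hseg hunc hpow f hfi hfc c₀ (resF t' c₀ hc₀.1.le)).2 := by
          rw [← hres]; exact hctl
        have key : ∀ (s : Set.Iio c₀ → ULift.{u} Bool), resF t c₀ hc₀.1.le = s →
            ∀ hctl2 : Controls f (Phi hseg hunc hpow f hfi hfc c₀ s).1
              (Phi hseg hunc hpow f hfi hfc c₀ s).2,
            (succ_exists hseg hunc f hfi hfc _ _ hctl2).choose = g := by
          rintro s rfl hctl2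
          rfl
        rw [Phi_eq]
        simp only [stepF]
        rw [dif_neg hbase, dif_pos hsucc, dif_pos hctl']
        rw [key _ hres hctl']
      have hbt := hb t rfl
      have hext : NdExt K (Phi hseg hunc hpow f hfi hfc b t).1
            (Phi hseg hunc hpow f hfi hfc c₀ (resF t c₀ hc₀.1.le)).1 ∧
          NdExt K (Phi hseg hunc hpow f hfi hfc b t).2
            (Phi hseg hunc hpow f hfi hfc c₀ (resF t c₀ hc₀.1.le)).2 := by
        rw [hbt]
        exact ⟨(hg.1 _).2.1, (hg.1 _).2.2.1⟩
      refine ⟨?_, ?_, ?_, ?_, ?_⟩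
      · rw [hbt]; exact (hg.1 _).2.2.2.2
      · rw [hbt]
        rcases le_or_gt b ((g (t ⟨c₀, hc₀.1⟩)).2.1) with h | h
        · exact h
        · exfalso
          have h1 := hc₀.2 _ h
          have h2 : c₀ < (g (t ⟨c₀, hc₀.1⟩)).2.1 :=
            lt_of_le_of_lt hIH.2.1 (hg.1 _).2.2.2.1
          exact absurd h1 (not_le.2 h2)
      · intro c h
        rcases eq_or_lt_of_le h with rfl | hlt
        · exact ⟨ndExt_refl _, ndExt_refl _⟩
        · have hcc₀ : c ≤ c₀ := hc₀.2 c hlt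
          have h2 := hIH.2.2.1 c hcc₀
          exact ⟨ndExt_trans hext.1 h2.1, ndExt_trans hext.2 h2.2⟩
      · intro hlim
        exfalso
        obtain ⟨d, hd1, hd2⟩ := hlim.2 c₀ hc₀.1
        exact absurd (hc₀.2 d hd2) (not_le.2 hd1)
      · intro hx t' hres hne
        have hbt' := hb t' hres
        rw [hbt, hbt']
        exact goodPair_split f hg hne
    · -- limit case
      have hlim : IsLimElt K b := by
        push_neg at hbase
        refine ⟨hbase, fun c hc => ?_⟩
        push_neg at hsucc
        obtain ⟨d, hd1, hd2⟩ := hsucc c hc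
        exact ⟨d, hd2, hd1⟩
      have hb : ∀ t' : Set.Iio b → ULift.{u} Bool,
          Phi hseg hunc hpow f hfi hfc b t' =
            (limN hseg hunc hpow b
              (fun c => (Phi hseg hunc hpow f hfi hfc c.1 (resF t' c.1 c.2.le)).1),
             limN hseg hunc hpow b
              (fun c => (Phi hseg hunc hpow f hfi hfc c.1 (resF t' c.1 c.2.le)).2)) := by
        intro t'
        rw [Phi_eq]
        simp only [stepF]
        rw [dif_neg hbase, dif_neg hsucc]
      have hbt := hb t
      set Gσ : Set.Iio b → Nd K K :=
        fun c => (Phi hseg hunc hpow f hfi hfc c.1 (resF t c.1 c.2.le)).1 with hGσ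
      set Ge : Set.Iio b → Nd K K :=
        fun c => (Phi hseg hunc hpow f hfi hfc c.1 (resF t c.1 c.2.le)).2 with hGe
      have hchσ : ∀ c c' : Set.Iio b, NdExt K (Gσ c) (Gσ c') ∨ NdExt K (Gσ c') (Gσ c) := by
        intro c c'
        have hmlt : max c.1 c'.1 < b := max_lt c.2 c'.2
        have hIHm := IH (max c.1 c'.1) hmlt (resF t _ hmlt.le)
        have h1 := (hIHm.2.2.1 c.1 (le_max_left _ _)).1
        have h2 := (hIHm.2.2.1 c'.1 (le_max_right _ _)).1
        exact ndExt_comparable h1 h2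
      have hche : ∀ c c' : Set.Iio b, NdExt K (Ge c) (Ge c') ∨ NdExt K (Ge c') (Ge c) := by
        intro c c'
        have hmlt : max c.1 c'.1 < b := max_lt c.2 c'.2
        have hIHm := IH (max c.1 c'.1) hmlt (resF t _ hmlt.le)
        have h1 := (hIHm.2.2.1 c.1 (le_max_left _ _)).2
        have h2 := (hIHm.2.2.1 c'.1 (le_max_right _ _)).2
        exact ndExt_comparable h1 h2
      refine ⟨?_, ?_, ?_, ?_, ?_⟩
      · -- controls
        rw [hbt]
        intro x hx i
        obtain ⟨c, hic⟩ := limN_len_lt hseg hunc hpow b Ge i.2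
        have hxc : ∀ k : Set.Iio (Gσ c).1, x k.1 = (Gσ c).2 k := by
          intro k
          have hext := limN_ext hseg hunc hpow b Gσ hchσ c
          have hk : k.1 < (limN hseg hunc hpow b Gσ).1 :=
            lt_of_lt_of_le k.2 hext.1
          exact (hx ⟨k.1, hk⟩).trans (ndExt_val hext k.2 hk)
        have hc1 := (IH c.1 c.2 (resF t c.1 c.2.le)).1
        have hval := hc1 x hxc ⟨i.1, hic⟩
        have hexte := limN_ext hseg hunc hpow b Ge hche c
        exact hval.trans (ndExt_val hexte hic i.2).symm
      · -- length
        rw [hbt]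
        by_contra hcon
        push_neg at hcon
        obtain ⟨c, hc1, hc2⟩ := hlim.2 _ hcon
        have h1 : c ≤ (Ge ⟨c, hc2⟩).1 := (IH c hc2 (resF t c hc2.le)).2.1
        have h2 : (Ge ⟨c, hc2⟩).1 ≤ (limN hseg hunc hpow b Ge).1 :=
          limN_len_le hseg hunc hpow b Ge _
        exact absurd (h1.trans h2) (not_le.2 hc1)
      · intro c h
        rcases eq_or_lt_of_le h with rfl | hlt
        · exact ⟨ndExt_refl _, ndExt_refl _⟩
        · rw [hbt]
          exact ⟨limN_ext hseg hunc hpow b Gσ hchσ ⟨c, hlt⟩,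
            limN_ext hseg hunc hpow b Ge hche ⟨c, hlt⟩⟩
      · intro _ d hd
        rw [hbt] at hd
        obtain ⟨c, hc⟩ := limN_len_lt hseg hunc hpow b Ge hd
        exact ⟨c.1, c.2, hc⟩
      · intro hx
        exfalso
        exact hsucc hx

end Master

section Derived
variable {K : Type u} [LinearOrder K] [WellFoundedLT K]
variable (hseg : ∀ b : K, #(Set.Iio b) < #K) (hunc : ℵ₀ < #K)
  (hpow : Cardinal.powerlt #K #K = #K)
variable (f : (K → K) → (K → K))
variable (hfi : Function.Injective f)
  (hfc : ∀ U : Set (K → K), IsOpen[bTop K K] U → IsOpen[bTop K K] (f ⁻¹' U))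

/-- the e-image of a node -/
noncomputable def eE (u : Nd K (ULift.{u} Bool)) : Nd K K :=
  (Phi hseg hunc hpow f hfi hfc u.1 u.2).2

/-- child node -/
noncomputable def chN (u : Nd K (ULift.{u} Bool)) (j : ULift.{u} Bool) :
    Nd K (ULift.{u} Bool) :=
  ⟨sK hseg hunc u.1, fun i => if h : i.1 < u.1 then u.2 ⟨i.1, h⟩ else j⟩

lemma chN_ext (u : Nd K (ULift.{u} Bool)) (j : ULift.{u} Bool) :
    NdExt K (chN hseg hunc u j) u :=
  ⟨(lt_sK hseg hunc u.1).le, fun i => dif_pos i.2⟩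

/-- D0 : value at the root -/
lemma phi_bot (t : Set.Iio (botK hunc) → ULift.{u} Bool) :
    Phi hseg hunc hpow f hfi hfc (botK hunc) t = (rootN hunc, rootN hunc) := by
  rw [Phi_eq]
  simp only [stepF]
  rw [dif_pos (fun c => not_lt.2 (botK_le hunc c))]

/-- D5 : length lower bound -/
lemma eE_len (u : Nd K (ULift.{u} Bool)) : u.1 ≤ (eE hseg hunc hpow f hfi hfc u).1 :=
  (master hseg hunc hpow f hfi hfc u.1 u.2).2.1

/-- D1 : e-nodes lie on branches of `f` -/
lemma eE_branch (u : Nd K (ULift.{u} Bool)) :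
    ∃ x : K → K, xRes K (f x) (eE hseg hunc hpow f hfi hfc u).1 =
      eE hseg hunc hpow f hfi hfc u := by
  classical
  set σ := (Phi hseg hunc hpow f hfi hfc u.1 u.2).1 with hσ
  set x : K → K := fun i => if h : i < σ.1 then σ.2 ⟨i, h⟩ else i with hx
  refine ⟨x, ?_⟩
  have hctl := (master hseg hunc hpow f hfi hfc u.1 u.2).1
  have hxσ : ∀ i : Set.Iio σ.1, x i.1 = σ.2 i := fun i => dif_pos i.2
  have hv := hctl x hxσ
  exact congrArg (Sigma.mk _) (funext fun i => hv i)

/-- D2 : monotonicity -/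
lemma eE_mono {u u' : Nd K (ULift.{u} Bool)} (h : NdExt K u' u) :
    NdExt K (eE hseg hunc hpow f hfi hfc u') (eE hseg hunc hpow f hfi hfc u) := by
  have hres : resF u'.2 u.1 h.1 = u.2 := funext fun i => h.2 i
  have := ((master hseg hunc hpow f hfi hfc u'.1 u'.2).2.2.1 u.1 h.1).2
  rwa [hres] at this

/-- D4 : limit continuity -/
lemma eE_lim {u : Nd K (ULift.{u} Bool)} (h : IsLimElt K u.1) {d : K}
    (hd : d < (eE hseg hunc hpow f hfi hfc u).1) :
    ∃ c, ∃ hc : c < u.1,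
      d < (eE hseg hunc hpow f hfi hfc (ndRes K u c hc.le)).1 :=
  (master hseg hunc hpow f hfi hfc u.1 u.2).2.2.2.1 h d hd

/-- siblings split -/
lemma eE_split (u : Nd K (ULift.{u} Bool)) {j j' : ULift.{u} Bool} (hjj : j ≠ j') :
    (eE hseg hunc hpow f hfi hfc (chN hseg hunc u j)).1 =
      (eE hseg hunc hpow f hfi hfc (chN hseg hunc u j')).1 ∧
    ∃ i, ∃ h : i < (eE hseg hunc hpow f hfi hfc (chN hseg hunc u j)).1,
      ∃ h' : i < (eE hseg hunc hpow f hfi hfc (chN hseg hunc u j')).1,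
      (eE hseg hunc hpow f hfi hfc (chN hseg hunc u j)).2 ⟨i, h⟩ ≠
        (eE hseg hunc hpow f hfi hfc (chN hseg hunc u j')).2 ⟨i, h'⟩ := by
  set b := sK hseg hunc u.1 with hb
  have hx : ∃ c, c < b ∧ ∀ d, d < b → d ≤ c :=
    ⟨u.1, lt_sK hseg hunc u.1, fun d hd => (lt_sK_iff hseg hunc).1 hd⟩
  have hcu : hx.choose = u.1 :=
    le_antisymm ((lt_sK_iff hseg hunc).1 hx.choose_spec.1)
      (hx.choose_spec.2 u.1 (lt_sK hseg hunc u.1))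
  have hC5 := (master hseg hunc hpow f hfi hfc b (chN hseg hunc u j).2).2.2.2.2 hx
    (chN hseg hunc u j').2
  have hagr : resF (chN hseg hunc u j).2 hx.choose hx.choose_spec.1.le =
      resF (chN hseg hunc u j').2 hx.choose hx.choose_spec.1.le := by
    funext k
    have hk : k.1 < u.1 := hcu ▸ k.2
    show (if h : k.1 < u.1 then u.2 ⟨k.1, h⟩ else j) =
      (if h : k.1 < u.1 then u.2 ⟨k.1, h⟩ else j')
    rw [dif_pos hk, dif_pos hk]
  have hne : (chN hseg hunc u j).2 ⟨hx.choose, hx.choose_spec.1⟩ ≠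
      (chN hseg hunc u j').2 ⟨hx.choose, hx.choose_spec.1⟩ := by
    have hnlt : ¬ hx.choose < u.1 := hcu ▸ lt_irrefl u.1
    show (if h : hx.choose < u.1 then u.2 ⟨hx.choose, h⟩ else j) ≠
      (if h : hx.choose < u.1 then u.2 ⟨hx.choose, h⟩ else j')
    rw [dif_neg hnlt, dif_neg hnlt]
    exact hjj
  exact hC5 hagr hne

/-- D3 : incompatibility is preserved -/
lemma eE_incompat {u u' : Nd K (ULift.{u} Bool)} (h1 : ¬ NdExt K u u') (h2 : ¬ NdExt K u' u) :
    ¬ NdExt K (eE hseg hunc hpow f hfi hfc u) (eE hseg hunc hpow f hfi hfc u') ∧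
    ¬ NdExt K (eE hseg hunc hpow f hfi hfc u') (eE hseg hunc hpow f hfi hfc u) := by
  -- find least disagreement
  have key : ∀ v v' : Nd K (ULift.{u} Bool), v.1 ≤ v'.1 → ¬ NdExt K v' v →
      ¬ NdExt K (eE hseg hunc hpow f hfi hfc v) (eE hseg hunc hpow f hfi hfc v') ∧
      ¬ NdExt K (eE hseg hunc hpow f hfi hfc v') (eE hseg hunc hpow f hfi hfc v) := by
    intro v v' hle hnext
    have hD : ∃ jj : K, ∃ hj : jj < v.1,
        v'.2 ⟨jj, lt_of_lt_of_le hj hle⟩ ≠ v.2 ⟨jj, hj⟩ := by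
      by_contra hcon
      push_neg at hcon
      exact hnext ⟨hle, fun i => hcon i.1 i.2⟩
    set D : Set K := {jj | ∃ hj : jj < v.1, v'.2 ⟨jj, lt_of_lt_of_le hj hle⟩ ≠ v.2 ⟨jj, hj⟩}
      with hDdef
    have hDne : D.Nonempty := hD
    set j₀ := kMin D hDne with hj₀def
    have hj₀ : j₀ ∈ D := kMin_mem D hDne
    obtain ⟨hj₀v, hj₀ne⟩ := hj₀
    have hmin : ∀ k, k < j₀ → ∀ hk : k < v.1,
        v'.2 ⟨k, lt_of_lt_of_le hk hle⟩ = v.2 ⟨k, hk⟩ := by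
      intro k hk hkv
      by_contra hcc
      exact absurd (kMin_le D hDne (⟨hkv, hcc⟩ : k ∈ D)) (not_le.2 hk)
    -- the restricted children at level sK j₀
    have hs : sK hseg hunc j₀ ≤ v.1 := sK_le hseg hunc hj₀v
    have hs' : sK hseg hunc j₀ ≤ v'.1 := hs.trans hle
    set w := ndRes K v (sK hseg hunc j₀) hs with hwdef
    set w' := ndRes K v' (sK hseg hunc j₀) hs' with hw'def
    -- identify them as siblings of the common part
    set v₀ := ndRes K v j₀ hj₀v.le with hv₀def
    have hwch : w = chN hseg hunc v₀ (v.2 ⟨j₀, hj₀v⟩) := by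
      refine congrArg (Sigma.mk _) (funext fun i => ?_)
      show v.2 _ = if h : i.1 < j₀ then v.2 _ else v.2 ⟨j₀, hj₀v⟩
      by_cases hij : i.1 < j₀
      · rw [dif_pos hij]
      · rw [dif_neg hij]
        have hieq : i.1 = j₀ := le_antisymm ((lt_sK_iff hseg hunc).1 i.2) (not_lt.1 hij)
        exact congrArg (fun z : Set.Iio v.1 => v.2 z) (Subtype.ext hieq)
    have hw'ch : w' = chN hseg hunc v₀ (v'.2 ⟨j₀, lt_of_lt_of_le hj₀v hle⟩) := by
      refine congrArg (Sigma.mk _) (funext fun i => ?_)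
      show v'.2 _ = if h : i.1 < j₀ then v.2 ⟨i.1, lt_of_lt_of_le h hj₀v.le⟩
        else v'.2 ⟨j₀, lt_of_lt_of_le hj₀v hle⟩
      by_cases hij : i.1 < j₀
      · rw [dif_pos hij]
        exact hmin i.1 hij (lt_of_lt_of_le hij hj₀v.le)
      · rw [dif_neg hij]
        have hieq : i.1 = j₀ := le_antisymm ((lt_sK_iff hseg hunc).1 i.2) (not_lt.1 hij)
        exact congrArg (fun z : Set.Iio v'.1 => v'.2 z) (Subtype.ext hieq)
    have hsplit := eE_split hseg hunc hpow f hfi hfc v₀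
      (j := v.2 ⟨j₀, hj₀v⟩) (j' := v'.2 ⟨j₀, lt_of_lt_of_le hj₀v hle⟩)
      (fun hh => hj₀ne hh.symm)
    rw [← hwch, ← hw'ch] at hsplit
    obtain ⟨-, i, hi, hi', hine⟩ := hsplit
    have hvw : NdExt K (eE hseg hunc hpow f hfi hfc v) (eE hseg hunc hpow f hfi hfc w) :=
      eE_mono hseg hunc hpow f hfi hfc (ndExt_res v _ hs)
    have hvw' : NdExt K (eE hseg hunc hpow f hfi hfc v') (eE hseg hunc hpow f hfi hfc w') :=
      eE_mono hseg hunc hpow f hfi hfc (ndExt_res v' _ hs')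
    exact ndExt_incompat hvw hvw' hi hi' hine
  rcases le_total u.1 u'.1 with hle | hle
  · exact key u u' hle h2
  · exact (key u' u hle h1).symm

end Derived

section PT
variable {K : Type u} [LinearOrder K] [WellFoundedLT K]
variable (hseg : ∀ b : K, #(Set.Iio b) < #K) (hunc : ℵ₀ < #K)
  (hpow : Cardinal.powerlt #K #K = #K)
variable (f : (K → K) → (K → K))
variable (hfi : Function.Injective f)
  (hfc : ∀ U : Set (K → K), IsOpen[bTop K K] U → IsOpen[bTop K K] (f ⁻¹' U))

lemma pigeon (δ β : K) (hβδ : β < δ) (hδlim : IsLimElt K δ)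
    (js : ∀ c, β < c → c < δ → ULift.{u} Bool) :
    ∃ j, ∀ d, d < δ → ∃ c, ∃ h0 : d < c, ∃ h1 : β < c, ∃ h2 : c < δ, js c h1 h2 = j := by
  by_contra h
  push_neg at h
  obtain ⟨df, hdfδ, hdf⟩ := h ⟨false⟩
  obtain ⟨dt, hdtδ, hdt⟩ := h ⟨true⟩
  obtain ⟨c, hc1, hc2⟩ := hδlim.2 (max β (max df dt)) (max_lt hβδ (max_lt hdfδ hdtδ))
  have h1 : β < c := lt_of_le_of_lt (le_max_left _ _) hc1
  have h0f : df < c := lt_of_le_of_lt ((le_max_left _ _).trans (le_max_right _ _)) hc1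
  have h0t : dt < c := lt_of_le_of_lt ((le_max_right _ _).trans (le_max_right _ _)) hc1
  rcases hjs : js c h1 hc2 with ⟨jb⟩
  cases jb
  · exact hdf c h0f h1 hc2 hjs
  · exact hdt c h0t h1 hc2 hjs

/-- the perfect subtree induced by the embedding -/
def Pset : Set (Nd K K) :=
  {p | ∃ u : Nd K (ULift.{u} Bool), NdExt K (eE hseg hunc hpow f hfi hfc u) p}

lemma eE_root :
    eE hseg hunc hpow f hfi hfc (rootN hunc : Nd K (ULift.{u} Bool)) = rootN hunc :=
  congrArg Prod.snd (phi_bot hseg hunc hpow f hfi hfc _)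

lemma ndExt_rootN {Y : Type u} (p : Nd K Y) : NdExt K p (rootN hunc : Nd K Y) :=
  ⟨botK_le hunc p.1, fun i => absurd i.2 (not_lt.2 (botK_le hunc i.1))⟩

lemma Pset_sub {T : Set (Nd K K)} (hT : IsSubtree K T) (hfT : ∀ x, f x ∈ body K T) :
    Pset hseg hunc hpow f hfi hfc ⊆ T := by
  rintro p ⟨u, hu⟩
  obtain ⟨x, hxe⟩ := eE_branch hseg hunc hpow f hfi hfc u
  have heT : eE hseg hunc hpow f hfi hfc u ∈ T := by
    rw [← hxe]; exact hfT x _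
  obtain ⟨b, tp⟩ := p
  have hpe : (⟨b, tp⟩ : Nd K K) = ndRes K (eE hseg hunc hpow f hfi hfc u) b hu.1 :=
    congrArg (Sigma.mk b) (funext fun i => (hu.2 i).symm)
  rw [hpe]
  exact hT _ heT b hu.1

lemma Pset_perfect (hδne : True) : PerfectTree K (Pset hseg hunc hpow f hfi hfc) := by
  refine ⟨⟨rootN hunc, ⟨rootN hunc, ?_⟩⟩, ?_, ?_, ?_⟩
  · rw [eE_root]; exact ndExt_refl _
  · -- subtree
    rintro p ⟨u, hu⟩ c h
    exact ⟨u, ndExt_trans hu (ndExt_res p c h)⟩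
  · -- superclosed
    intro p hplim H
    classical
    set W : Set (Nd K (ULift.{u} Bool)) :=
      {v | NdExt K p (eE hseg hunc hpow f hfi hfc v)} with hWdef
    have hWroot : (rootN hunc : Nd K (ULift.{u} Bool)) ∈ W := by
      show NdExt K p (eE hseg hunc hpow f hfi hfc _)
      rw [eE_root]
      exact ndExt_rootN hunc p
    have hWbd : ∃ m, ∀ uw : ↥W, (uw.1).1 ≤ m :=
      ⟨p.1, fun uw => le_trans (eE_len hseg hunc hpow f hfi hfc uw.1) uw.2.1⟩
    set βs := lubF (fun uw : ↥W => uw.1.1) hWbd with hβs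
    set ustar : Nd K (ULift.{u} Bool) :=
      ⟨βs, fun i => ((lt_lubF (fun uw : ↥W => uw.1.1) hWbd i.2).choose.1).2
        ⟨i.1, (lt_lubF (fun uw : ↥W => uw.1.1) hWbd i.2).choose_spec⟩⟩ with hustar
    have hchain : ∀ uw uw' : ↥W, NdExt K uw.1 uw'.1 ∨ NdExt K uw'.1 uw.1 := by
      intro uw uw'
      by_contra hc
      push_neg at hc
      have hinc := eE_incompat hseg hunc hpow f hfi hfc hc.1 hc.2
      rcases ndExt_comparable uw.2 uw'.2 with h | h
      · exact hinc.1 h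
      · exact hinc.2 h
    have hustext : ∀ uw : ↥W, NdExt K ustar uw.1 := by
      intro uw
      refine ⟨le_lubF (fun uw : ↥W => uw.1.1) hWbd uw, fun i => ?_⟩
      set hch := lt_lubF (fun uw : ↥W => uw.1.1) hWbd
        (lt_of_lt_of_le i.2 (le_lubF (fun uw : ↥W => uw.1.1) hWbd uw)) with hhch
      show (hch.choose.1).2 ⟨i.1, hch.choose_spec⟩ = uw.1.2 i
      rcases hchain hch.choose uw with h | h
      · exact ndExt_val h i.2 hch.choose_spec
      · exact (ndExt_val h hch.choose_spec i.2).symm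
    have hustlen : ustar.1 = βs := rfl
    -- Phase A : p extends (eE ustar)
    have hpu : NdExt K p (eE hseg hunc hpow f hfi hfc ustar) := by
      by_cases hmax : ∃ uw : ↥W, uw.1.1 = βs
      · obtain ⟨uw, hlen⟩ := hmax
        have huu : ustar = uw.1 := ndExt_eq (hustext uw) (hustlen.trans hlen.symm)
        rw [huu]
        exact uw.2
      · have hlt : ∀ uw : ↥W, uw.1.1 < βs := fun uw =>
          lt_of_le_of_ne (le_lubF (fun uw : ↥W => uw.1.1) hWbd uw) fun h => hmax ⟨uw, h⟩
        have hβlim : IsLimElt K βs := by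
          refine ⟨⟨botK hunc, hlt ⟨rootN hunc, hWroot⟩⟩, fun c hc => ?_⟩
          obtain ⟨uw, h⟩ := lt_lubF (fun uw : ↥W => uw.1.1) hWbd hc
          exact ⟨uw.1.1, h, hlt uw⟩
        have hresW : ∀ c (hc : c < βs),
            NdExt K p (eE hseg hunc hpow f hfi hfc (ndRes K ustar c hc.le)) := by
          intro c hc
          obtain ⟨uw, hcu⟩ := lt_lubF (fun uw : ↥W => uw.1.1) hWbd hc
          have hres_eq : ndRes K ustar c hc.le = ndRes K uw.1 c hcu.le := by
            refine congrArg (Sigma.mk c) (funext fun i => ?_)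
            exact ndExt_val (hustext uw) (lt_trans i.2 hcu) (lt_of_lt_of_le i.2 hc.le)
          rw [hres_eq]
          exact ndExt_trans uw.2
            (eE_mono hseg hunc hpow f hfi hfc (ndExt_res uw.1 c hcu.le))
        have hlenle : (eE hseg hunc hpow f hfi hfc ustar).1 ≤ p.1 := by
          by_contra hgt
          push_neg at hgt
          obtain ⟨c, hc, hdc⟩ := eE_lim hseg hunc hpow f hfi hfc (u := ustar) hβlim hgt
          exact absurd hdc (not_lt.2 (hresW c hc).1)
        refine ⟨hlenle, fun i => ?_⟩
        obtain ⟨c, hc, hic⟩ := eE_lim hseg hunc hpow f hfi hfc (u := ustar) hβlim i.2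
        have h1 := (hresW c hc).2 ⟨i.1, hic⟩
        have h2 := ndExt_val
          (eE_mono hseg hunc hpow f hfi hfc (ndExt_res ustar c hc.le)) hic i.2
        exact h1.trans h2.symm
    -- Phase B
    rcases eq_or_lt_of_le hpu.1 with heq | hβδ
    · have hpe : p = eE hseg hunc hpow f hfi hfc ustar := ndExt_eq hpu heq.symm
      exact ⟨ustar, by rw [← hpe]; exact ndExt_refl p⟩
    · set βv := (eE hseg hunc hpow f hfi hfc ustar).1 with hβv
      set sst := sK hseg hunc ustar.1 with hsst
      have hdata : ∀ c, βv < c → ∀ hc2 : c < p.1, ∃ j : ULift.{u} Bool,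
          c < (eE hseg hunc hpow f hfi hfc (chN hseg hunc ustar j)).1 ∧
          ∀ i (hi : i < c)
            (hi' : i < (eE hseg hunc hpow f hfi hfc (chN hseg hunc ustar j)).1),
            (eE hseg hunc hpow f hfi hfc (chN hseg hunc ustar j)).2 ⟨i, hi'⟩ =
              p.2 ⟨i, hi.trans hc2⟩ := by
        intro c hc1 hc2
        obtain ⟨uc, huc⟩ := H c hc2
        have hcl : c ≤ (eE hseg hunc hpow f hfi hfc uc).1 := huc.1
        have hpc_u : NdExt K (ndRes K p c hc2.le) (eE hseg hunc hpow f hfi hfc ustar) :=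
          ⟨hc1.le, fun i => hpu.2 i⟩
        have step1 : NdExt K (eE hseg hunc hpow f hfi hfc uc)
            (eE hseg hunc hpow f hfi hfc ustar) := ndExt_trans huc hpc_u
        have step2 : NdExt K uc ustar := by
          by_cases hca : NdExt K ustar uc
          · have hm := eE_mono hseg hunc hpow f hfi hfc hca
            exact absurd (hcl.trans hm.1) (not_le.2 hc1)
          · by_cases hcb : NdExt K uc ustar
            · exact hcb
            · exact absurd step1 ((eE_incompat hseg hunc hpow f hfi hfc hcb hca).1)
        have hlt2 : ustar.1 < uc.1 := by
          rcases eq_or_lt_of_le step2.1 with he | hgood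
          · exfalso
            have huq : uc = ustar := ndExt_eq step2 he.symm
            rw [huq] at hcl
            exact absurd hcl (not_le.2 hc1)
          · exact hgood
        have hss : sst ≤ uc.1 := sK_le hseg hunc hlt2
        set wc := ndRes K uc sst hss with hwcdef
        have hwcuc : NdExt K (eE hseg hunc hpow f hfi hfc uc)
            (eE hseg hunc hpow f hfi hfc wc) :=
          eE_mono hseg hunc hpow f hfi hfc (ndExt_res uc sst hss)
        have hwc_len : c < (eE hseg hunc hpow f hfi hfc wc).1 := by
          by_contra hle'
          push_neg at hle'
          have hcontr : NdExt K p (eE hseg hunc hpow f hfi hfc wc) → False := by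
            intro hwcW
            have hb := le_lubF (fun uw : ↥W => uw.1.1) hWbd ⟨wc, hwcW⟩
            exact absurd hb (not_le.2 (lt_sK hseg hunc ustar.1))
          rcases ndExt_comparable hwcuc huc with hA | hB
          · have hceq : (eE hseg hunc hpow f hfi hfc wc).1 = c := le_antisymm hle' hA.1
            have heqq : eE hseg hunc hpow f hfi hfc wc = ndRes K p c hc2.le :=
              ndExt_eq hA hceq
            exact hcontr (by rw [heqq]; exact ndExt_res p c hc2.le)
          · exact hcontr (ndExt_trans (ndExt_res p c hc2.le) hB)
        have hwc_val : ∀ i (hi : i < c)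
            (hi' : i < (eE hseg hunc hpow f hfi hfc wc).1),
            (eE hseg hunc hpow f hfi hfc wc).2 ⟨i, hi'⟩ = p.2 ⟨i, hi.trans hc2⟩ := by
          intro i hi hi'
          have hiuc : i < (eE hseg hunc hpow f hfi hfc uc).1 := lt_of_lt_of_le hi hcl
          have h1 := ndExt_val hwcuc hi' hiuc
          have h2 := ndExt_val huc hi hiuc
          exact h1.symm.trans h2
        set jc := uc.2 ⟨ustar.1, hlt2⟩ with hjcdef
        have hwch : wc = chN hseg hunc ustar jc := by
          refine congrArg (Sigma.mk _) (funext fun i => ?_)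
          show uc.2 _ = if h : i.1 < ustar.1 then ustar.2 ⟨i.1, h⟩ else jc
          by_cases hij : i.1 < ustar.1
          · rw [dif_pos hij]
            exact ndExt_val step2 hij (lt_of_lt_of_le i.2 hss)
          · rw [dif_neg hij]
            have hieq : i.1 = ustar.1 :=
              le_antisymm ((lt_sK_iff hseg hunc).1 i.2) (not_lt.1 hij)
            exact congrArg (fun z : Set.Iio uc.1 => uc.2 z) (Subtype.ext hieq)
        refine ⟨jc, ?_, ?_⟩
        · rw [← hwch]; exact hwc_len
        · rw [← hwch]; exact hwc_val
      obtain ⟨j, hj⟩ := pigeon p.1 βv hβδ hplim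
        (fun c h1 h2 => (hdata c h1 h2).choose)
      have hwlen : p.1 ≤ (eE hseg hunc hpow f hfi hfc (chN hseg hunc ustar j)).1 := by
        by_contra hlt'
        push_neg at hlt'
        obtain ⟨c, h0, h1, h2, hjeq⟩ := hj _ hlt'
        have hspec := (hdata c h1 h2).choose_spec.1
        rw [hjeq] at hspec
        exact absurd hspec (not_lt.2 h0.le)
      refine ⟨chN hseg hunc ustar j, hwlen, fun i => ?_⟩
      obtain ⟨c, h0, h1, h2, hjeq⟩ := hj i.1 i.2
      have hspec := (hdata c h1 h2).choose_spec
      rw [hjeq] at hspec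
      exact hspec.2 i.1 h0 (lt_of_lt_of_le i.2 hwlen)
  · -- splitting
    rintro p ⟨u, hu⟩
    classical
    have hsp := eE_split hseg hunc hpow f hfi hfc u
      (j := (⟨false⟩ : ULift.{u} Bool)) (j' := (⟨true⟩ : ULift.{u} Bool))
      (fun h => Bool.false_ne_true (congrArg ULift.down h))
    obtain ⟨hlen, hine⟩ := hsp
    set e0 := eE hseg hunc hpow f hfi hfc (chN hseg hunc u ⟨false⟩) with he0
    set e1 := eE hseg hunc hpow f hfi hfc (chN hseg hunc u ⟨true⟩) with he1
    set Ds : Set K := {i | ∃ h : i < e0.1, ∃ h' : i < e1.1, e0.2 ⟨i, h⟩ ≠ e1.2 ⟨i, h'⟩}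
      with hDs
    have hDne : Ds.Nonempty := by
      obtain ⟨i, h, h', hne⟩ := hine
      exact ⟨i, h, h', hne⟩
    set i₀ := kMin Ds hDne with hi₀
    obtain ⟨hi₀0, hi₀1, hi₀ne⟩ := kMin_mem Ds hDne
    have hmin : ∀ k, k < i₀ → ∀ hk : k < e0.1, ∀ hk' : k < e1.1,
        e0.2 ⟨k, hk⟩ = e1.2 ⟨k, hk'⟩ := by
      intro k hk hk0 hk1
      by_contra hcc
      exact absurd (kMin_le Ds hDne (⟨hk0, hk1, hcc⟩ : k ∈ Ds)) (not_le.2 hk)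
    have hch0 : NdExt K e0 (eE hseg hunc hpow f hfi hfc u) :=
      eE_mono hseg hunc hpow f hfi hfc (chN_ext hseg hunc u ⟨false⟩)
    have hch1 : NdExt K e1 (eE hseg hunc hpow f hfi hfc u) :=
      eE_mono hseg hunc hpow f hfi hfc (chN_ext hseg hunc u ⟨true⟩)
    have hlu : (eE hseg hunc hpow f hfi hfc u).1 ≤ i₀ := by
      by_contra hlt'
      push_neg at hlt'
      have h1 := ndExt_val hch0 hlt' hi₀0
      have h2 := ndExt_val hch1 hlt' hi₀1
      exact hi₀ne (h1.trans h2.symm)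
    set q := ndRes K e0 i₀ hi₀0.le with hq
    have hqP : q ∈ Pset hseg hunc hpow f hfi hfc :=
      ⟨chN hseg hunc u ⟨false⟩, ndExt_res e0 i₀ hi₀0.le⟩
    have hqu : NdExt K q (eE hseg hunc hpow f hfi hfc u) :=
      ⟨hlu, fun i => ndExt_val hch0 i.2 (lt_of_lt_of_le i.2 (hlu.trans hi₀0.le))⟩
    refine ⟨q, hqP, ndExt_trans hqu hu, e0.2 ⟨i₀, hi₀0⟩, ?_, e1.2 ⟨i₀, hi₀1⟩, ?_, hi₀ne⟩
    · -- e0 value is a split value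
      refine ⟨ndRes K e0 (sK hseg hunc i₀) (sK_le hseg hunc hi₀0), 
        ⟨chN hseg hunc u ⟨false⟩, ndExt_res e0 _ _⟩, lt_sK hseg hunc i₀, fun i => rfl, rfl⟩
    · refine ⟨ndRes K e1 (sK hseg hunc i₀) (by rw [← hlen] at hi₀1 ⊢; exact sK_le hseg hunc hi₀1),
        ⟨chN hseg hunc u ⟨true⟩, ndExt_res e1 _ _⟩, lt_sK hseg hunc i₀, fun i => ?_, rfl⟩
      exact (hmin i.1 i.2 (lt_of_lt_of_le i.2 hi₀0.le) (lt_of_lt_of_le i.2 hi₀1.le)).symm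

end PT

section Final
variable {K : Type u} [LinearOrder K] [WellFoundedLT K]

lemma part2 (hseg : ∀ b : K, #(Set.Iio b) < #K) (hunc : ℵ₀ < #K)
    (hpow : Cardinal.powerlt #K #K = #K) {T : Set (Nd K K)} (hT : IsSubtree K T)
    (h1 : ¬ ∃ S, S ⊆ T ∧ PerfectTree K S) :
    ¬ ∃ C ⊆ body K T, IsClosed[bTop K K] C ∧ HomeoToBaire K C := by
  rintro ⟨C, hCb, hCc, hhom⟩
  obtain ⟨e⟩ := hhom
  letI : TopologicalSpace (K → K) := bTop K K
  set f : (K → K) → (K → K) := fun z => ((e.symm z : ↥C) : K → K) with hf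
  have hfi : Function.Injective f := fun a b h =>
    e.symm.toEquiv.injective (Subtype.ext h)
  have hfcont : Continuous f := continuous_subtype_val.comp e.symm.continuous
  have hfc : ∀ U : Set (K → K), IsOpen[bTop K K] U → IsOpen[bTop K K] (f ⁻¹' U) :=
    fun U hU => hU.preimage hfcont
  have hfT : ∀ x, f x ∈ body K T := fun x => hCb (e.symm x).2
  exact h1 ⟨Pset hseg hunc hpow f hfi hfc,
    Pset_sub hseg hunc hpow f hfi hfc hT hfT,
    Pset_perfect hseg hunc hpow f hfi hfc trivial⟩

end Final

/-- If a pruned subtree `T` has no perfect subtree, `[T]` is κ-Baire, and every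
node of `T` is κ-splitting, then `[T]` fails the Hurewicz dichotomy: it is not
contained in any `K_κ` set and contains no closed copy of `K → K`. -/
theorem counterexample_from_three_properties (K : Type u) [LinearOrder K] [WellFoundedLT K]
    (hseg : ∀ b : K, #(Set.Iio b) < #K)
    (hunc : ℵ₀ < #K) (hpow : Cardinal.powerlt #K #K = #K)
    (T : Set (Nd K K)) (hT : IsSubtree K T) (hpr : Pruned K T)
    (h1 : ¬ ∃ S, S ⊆ T ∧ PerfectTree K S)
    (h2 : ∀ D : K → Set (K → K),
      (∀ c, ∃ U, IsOpen[bTop K K] U ∧ D c = U ∩ body K T) →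
      (∀ c, ∀ x ∈ body K T, ∀ b : K, ∃ y ∈ D c, ∀ i, i < b → y i = x i) →
      ∃ x ∈ body K T, ∀ c, x ∈ D c)
    (h3 : ∀ p ∈ T, #K ≤ #(splitVals K T p)) :
    (¬ ∃ B, IsKK K B ∧ body K T ⊆ B) ∧
    (¬ ∃ C ⊆ body K T, IsClosed[bTop K K] C ∧ HomeoToBaire K C) :=
  ⟨part1 hseg hunc hpow hT hpr h2 h3, part2 hseg hunc hpow hT h1⟩
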